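/- arXiv:1109.2550 — 2 statements merged into one kernel-verified Lean document; each statement's English description precedes it below -/
import Mathlib

section
/- Let Ω be a bounded open set in ℝⁿ with diameter d, and let 1 < p < ∞, θ > 0, α ≥ 0, 0 ≤ λ < 1. There exists a constant C, depending only on n, p, λ, θ, α and d (but not on f, s or σ), such that for all 0 < σ < s < min{p−1, λ/α} and every measurable function f : Ω → ℝ, one has Φ^{p,λ}_{θ,α}(f, s) ≤ C · s^{θ/(p−s)} · σ^{−θ/(p−σ)} · Φ^{p,λ}_{θ,α}(f, σ). -/
/-!
For `ε < σ` the term of `Φ(f, s)` at `ε` is already a term of `Φ(f, σ)`. For `σ ≤ ε < s`,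
Hölder's inequality on each ball `B(x, r)` bounds the `L^{p-ε, λ-αε}` Morrey norm by
`|B(0, d)|^c` times the `L^{p-σ/2, λ-ασ/2}` one, with `0 ≤ c ≤ 1`, and the latter is controlled
by the term of `Φ(f, σ)` at `σ / 2`. The weights are compared through
`ε^{θ/(p-ε)} ≤ e^θ s^{θ/(p-s)}` (the exponent gap is at most `θ s` and `s^{-θ s} ≤ e^θ`) and
`σ^{θ/(p-σ)} ≤ 2^θ max(1, p-1)^θ (σ/2)^{θ/(p-σ/2)}`.
-/

open MeasureTheory Metric Set ENNReal

/-- Morrey "norm" of an `ℝ≥0∞`-valued function on `Ω`: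
`sup_{x ∈ Ω, 0 < r ≤ diam Ω} ( |B(x,r)|^{-μ} ∫_{B(x,r) ∩ Ω} f^q )^{1/q}`. -/
noncomputable def morreyNormE {n : ℕ} (Ω : Set (EuclideanSpace ℝ (Fin n)))
    (q μ : ℝ) (f : EuclideanSpace ℝ (Fin n) → ℝ≥0∞) : ℝ≥0∞ :=
  ⨆ x ∈ Ω, ⨆ r ∈ Set.Ioc (0 : ℝ) (Metric.diam Ω),
    ((volume (Metric.ball x r)) ^ (-μ) *
      ∫⁻ y in Metric.ball x r ∩ Ω, f y ^ q) ^ (1 / q)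

/-- Morrey norm of a real-valued function. -/
noncomputable def morreyNorm {n : ℕ} (Ω : Set (EuclideanSpace ℝ (Fin n)))
    (q μ : ℝ) (f : EuclideanSpace ℝ (Fin n) → ℝ) : ℝ≥0∞ :=
  morreyNormE Ω q μ (fun y => (‖f y‖₊ : ℝ≥0∞))

/-- `min {p-1, λ/α}` with the convention `λ/α = ∞` if `α = 0`. -/
noncomputable def sMax (p lam α : ℝ) : ℝ :=
  if α = 0 then p - 1 else min (p - 1) (lam / α)

/-- The functional `Φ^{p,λ}_{θ,α}(f,s) = sup_{0<ε<s} ε^{θ/(p-ε)} ‖f‖_{L^{p-ε,λ-αε}}`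
for `ℝ≥0∞`-valued `f`. -/
noncomputable def grandPhiE {n : ℕ} (Ω : Set (EuclideanSpace ℝ (Fin n)))
    (p lam θ α : ℝ) (f : EuclideanSpace ℝ (Fin n) → ℝ≥0∞) (s : ℝ) : ℝ≥0∞ :=
  ⨆ ε ∈ Set.Ioo (0 : ℝ) s,
    ENNReal.ofReal (ε ^ (θ / (p - ε))) * morreyNormE Ω (p - ε) (lam - α * ε) f

/-- The functional `Φ^{p,λ}_{θ,α}(f,s)` for real-valued `f`. -/
noncomputable def grandPhi {n : ℕ} (Ω : Set (EuclideanSpace ℝ (Fin n)))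
    (p lam θ α : ℝ) (f : EuclideanSpace ℝ (Fin n) → ℝ) (s : ℝ) : ℝ≥0∞ :=
  grandPhiE Ω p lam θ α (fun y => (‖f y‖₊ : ℝ≥0∞)) s

/-- The grand grand Morrey norm `‖f‖_{L^{p),λ)}_{θ,α}(Ω)} = Φ^{p,λ}_{θ,α}(f, s_max)`. -/
noncomputable def grandNormE {n : ℕ} (Ω : Set (EuclideanSpace ℝ (Fin n)))
    (p lam θ α : ℝ) (f : EuclideanSpace ℝ (Fin n) → ℝ≥0∞) : ℝ≥0∞ :=
  grandPhiE Ω p lam θ α f (sMax p lam α)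

noncomputable def grandNorm {n : ℕ} (Ω : Set (EuclideanSpace ℝ (Fin n)))
    (p lam θ α : ℝ) (f : EuclideanSpace ℝ (Fin n) → ℝ) : ℝ≥0∞ :=
  grandPhi Ω p lam θ α f (sMax p lam α)

/-- The centered Hardy–Littlewood maximal operator on `Ω`:
`Mf(x) = sup_{0<r<diam Ω} |B̃(x,r)|⁻¹ ∫_{B̃(x,r)} |f|`. -/
noncomputable def maximalFn {n : ℕ} (Ω : Set (EuclideanSpace ℝ (Fin n)))
    (f : EuclideanSpace ℝ (Fin n) → ℝ) (x : EuclideanSpace ℝ (Fin n)) : ℝ≥0∞ :=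
  ⨆ r ∈ Set.Ioo (0 : ℝ) (Metric.diam Ω),
    (volume (Metric.ball x r ∩ Ω))⁻¹ * ∫⁻ y in Metric.ball x r ∩ Ω, (‖f y‖₊ : ℝ≥0∞)

lemma rpow_neg_le_exp_of_le_mul {s a θ : ℝ} (hs : 0 < s) (ha : 0 ≤ a) (haθ : a ≤ θ * s) :
    s ^ (-a) ≤ Real.exp θ := by
  rw [Real.rpow_def_of_pos hs, Real.exp_le_exp]
  have hlog : -Real.log s ≤ s⁻¹ - 1 := by
    simpa [Real.log_inv] using Real.log_le_sub_one_of_pos (inv_pos.2 hs)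
  have has : a * s⁻¹ ≤ θ := by
    rw [← div_eq_mul_inv, div_le_iff₀ hs]
    exact haθ
  nlinarith [mul_le_mul_of_nonneg_left hlog ha]

lemma rpow_div_sub_le_exp_mul {p θ ε s : ℝ} (hθ : 0 ≤ θ) (hε : 0 < ε) (hεs : ε ≤ s)
    (hs : s ≤ p - 1) : ε ^ (θ / (p - ε)) ≤ Real.exp θ * s ^ (θ / (p - s)) := by
  have hs0 : 0 < s := hε.trans_le hεs
  have hgap_nonneg : 0 ≤ θ / (p - s) - θ / (p - ε) :=
    sub_nonneg.2 (div_le_div_of_nonneg_left hθ (by linarith) (by linarith))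
  have hgap_le : θ / (p - s) - θ / (p - ε) ≤ θ * s := by
    have hgap : θ / (p - s) - θ / (p - ε) = θ * (s - ε) / ((p - s) * (p - ε)) := by
      field_simp [show p - s ≠ 0 by linarith, show p - ε ≠ 0 by linarith]
      ring
    have hprod : 1 ≤ (p - s) * (p - ε) := by nlinarith
    rw [hgap, div_le_iff₀ (by linarith)]
    nlinarith [mul_le_mul_of_nonneg_left hprod (mul_nonneg hθ hs0.le), mul_nonneg hθ hε.le]
  calc ε ^ (θ / (p - ε)) ≤ s ^ (θ / (p - ε)) :=
        Real.rpow_le_rpow hε.le hεs (div_nonneg hθ (by linarith))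
    _ = s ^ (θ / (p - s)) * s ^ (-(θ / (p - s) - θ / (p - ε))) := by
        rw [← Real.rpow_add hs0]
        ring_nf
    _ ≤ s ^ (θ / (p - s)) * Real.exp θ := by
        gcongr
        exact rpow_neg_le_exp_of_le_mul hs0 hgap_nonneg hgap_le
    _ = Real.exp θ * s ^ (θ / (p - s)) := mul_comm _ _

lemma rpow_div_sub_le_mul {p θ ε s : ℝ} (hθ : 0 ≤ θ) (hε : 0 < ε) (hεs : ε ≤ s)
    (hs : s ≤ p - 1) :
    s ^ (θ / (p - s)) ≤ (s / ε) ^ θ * max 1 (p - 1) ^ θ * ε ^ (θ / (p - ε)) := by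
  have hb : θ / (p - s) ≤ θ := div_le_self hθ (by linarith)
  have ha : 0 ≤ θ / (p - ε) := div_nonneg hθ (by linarith)
  have hab : θ / (p - ε) ≤ θ / (p - s) :=
    div_le_div_of_nonneg_left hθ (by linarith) (by linarith)
  calc s ^ (θ / (p - s))
      = (s / ε) ^ (θ / (p - s)) * ε ^ (θ / (p - s) - θ / (p - ε)) * ε ^ (θ / (p - ε)) := by
        rw [mul_assoc, ← Real.rpow_add hε, sub_add_cancel,
          ← Real.mul_rpow (div_nonneg (hε.le.trans hεs) hε.le) hε.le, div_mul_cancel₀ _ hε.ne']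
    _ ≤ (s / ε) ^ θ * max 1 (p - 1) ^ θ * ε ^ (θ / (p - ε)) := by
        have hratio : (s / ε) ^ (θ / (p - s)) ≤ (s / ε) ^ θ :=
          Real.rpow_le_rpow_of_exponent_le ((one_le_div hε).2 hεs) hb
        have hgap : ε ^ (θ / (p - s) - θ / (p - ε)) ≤ max 1 (p - 1) ^ θ :=
          calc ε ^ (θ / (p - s) - θ / (p - ε))
              ≤ max 1 (p - 1) ^ (θ / (p - s) - θ / (p - ε)) :=
                Real.rpow_le_rpow hε.le (le_max_of_le_right (hεs.trans hs)) (by linarith)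
            _ ≤ max 1 (p - 1) ^ θ :=
                Real.rpow_le_rpow_of_exponent_le (le_max_left _ _) (by linarith)
        have hratio_nonneg : 0 ≤ (s / ε) ^ θ :=
          Real.rpow_nonneg (div_nonneg (hε.le.trans hεs) hε.le) _
        gcongr

lemma rpow_mul_lintegral_rpow_eq_mul_eLpNorm' {X : Type*} [MeasurableSpace X] (ν : Measure X)
    (V : ℝ≥0∞) {q μ : ℝ} (hq : 0 < q) (g : X → ℝ≥0∞) :
    (V ^ (-μ) * ∫⁻ y, g y ^ q ∂ν) ^ (1 / q) = V ^ (-μ / q) * eLpNorm' g q ν := by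
  rw [eLpNorm'_eq_lintegral_enorm, ENNReal.mul_rpow_of_nonneg _ _ (by positivity),
    ← ENNReal.rpow_mul, mul_one_div]
  rfl

lemma morreyNormE_le_rpow_mul_morreyNormE {n : ℕ} (Ω : Set (EuclideanSpace ℝ (Fin n)))
    {q q' μ μ' : ℝ} (hq' : 0 < q') (hqq : q' ≤ q) (hμ : (1 - μ) / q ≤ (1 - μ') / q')
    {g : EuclideanSpace ℝ (Fin n) → ℝ≥0∞} (hg : Measurable g) :
    morreyNormE Ω q' μ' g ≤
      volume (ball (0 : EuclideanSpace ℝ (Fin n)) (diam Ω)) ^ ((1 - μ') / q' - (1 - μ) / q) *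
        morreyNormE Ω q μ g := by
  refine iSup₂_le fun x hx => iSup₂_le fun r hr => ?_
  set V := volume (ball x r)
  set ν := volume.restrict (ball x r ∩ Ω)
  have hV0 : V ≠ 0 := (measure_ball_pos volume x hr.1).ne'
  have hVtop : V ≠ ⊤ := measure_ball_lt_top.ne
  have hV : V ≤ volume (ball (0 : EuclideanSpace ℝ (Fin n)) (diam Ω)) := by
    rw [← Measure.addHaar_ball_center volume x]
    exact measure_mono (ball_subset_ball hr.2)
  have hholder : eLpNorm' g q' ν ≤ eLpNorm' g q ν * V ^ (1 / q' - 1 / q) :=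
    calc eLpNorm' g q' ν ≤ eLpNorm' g q ν * ν univ ^ (1 / q' - 1 / q) :=
          eLpNorm'_le_eLpNorm'_mul_rpow_measure_univ hq' hqq hg.aestronglyMeasurable
      _ ≤ eLpNorm' g q ν * V ^ (1 / q' - 1 / q) := by
          have hexp_nonneg : 1 / q ≤ 1 / q' := one_div_le_one_div_of_le hq' hqq
          rw [Measure.restrict_apply_univ]
          gcongr
          exact measure_mono inter_subset_left
  have hexp : V ^ (-μ' / q') * V ^ (1 / q' - 1 / q) =
      V ^ ((1 - μ') / q' - (1 - μ) / q) * V ^ (-μ / q) := by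
    rw [← ENNReal.rpow_add _ _ hV0 hVtop, ← ENNReal.rpow_add _ _ hV0 hVtop]
    congr 1
    ring
  calc (V ^ (-μ') * ∫⁻ y in ball x r ∩ Ω, g y ^ q') ^ (1 / q')
      = V ^ (-μ' / q') * eLpNorm' g q' ν := rpow_mul_lintegral_rpow_eq_mul_eLpNorm' ν V hq' g
    _ ≤ V ^ (-μ' / q') * (eLpNorm' g q ν * V ^ (1 / q' - 1 / q)) := by gcongr
    _ = V ^ ((1 - μ') / q' - (1 - μ) / q) * (V ^ (-μ / q) * eLpNorm' g q ν) := by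
        rw [mul_left_comm, hexp]
        ring
    _ = V ^ ((1 - μ') / q' - (1 - μ) / q) * (V ^ (-μ) * ∫⁻ y in ball x r ∩ Ω, g y ^ q) ^ (1 / q) :=
        by rw [rpow_mul_lintegral_rpow_eq_mul_eLpNorm' ν V (hq'.trans_le hqq) g]
    _ ≤ volume (ball (0 : EuclideanSpace ℝ (Fin n)) (diam Ω)) ^ ((1 - μ') / q' - (1 - μ) / q) *
          morreyNormE Ω q μ g := by
        gcongr
        exact le_iSup₂_of_le (f := fun x _ => ⨆ r ∈ Ioc (0 : ℝ) (diam Ω), _) x hx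
          (le_iSup₂_of_le r hr le_rfl)

lemma rpow_le_max_one (x : ℝ≥0∞) {c : ℝ} (hc0 : 0 ≤ c) (hc1 : c ≤ 1) : x ^ c ≤ max 1 x :=
  calc x ^ c ≤ max 1 x ^ c := ENNReal.rpow_le_rpow (le_max_right _ _) hc0
    _ ≤ max 1 x ^ (1 : ℝ) := ENNReal.rpow_le_rpow_of_exponent_le (le_max_left _ _) hc1
    _ = max 1 x := ENNReal.rpow_one _

lemma morreyNormE_le_max_one_mul_morreyNormE {n : ℕ} (Ω : Set (EuclideanSpace ℝ (Fin n)))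
    {q q' μ μ' : ℝ} (hq' : 1 ≤ q') (hqq : q' ≤ q) (hμ' : 0 ≤ μ') (hμμ : μ' ≤ μ) (hμ : μ ≤ 1)
    {g : EuclideanSpace ℝ (Fin n) → ℝ≥0∞} (hg : Measurable g) :
    morreyNormE Ω q' μ' g ≤
      max 1 (volume (ball (0 : EuclideanSpace ℝ (Fin n)) (diam Ω))) * morreyNormE Ω q μ g := by
  have hexp_mono : (1 - μ) / q ≤ (1 - μ') / q' :=
    div_le_div₀ (by linarith) (by linarith) (by linarith) hqq
  have hc_nonneg : 0 ≤ (1 - μ) / q := div_nonneg (by linarith) (by linarith)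
  have hc_le : (1 - μ') / q' ≤ 1 := by
    rw [div_le_one₀ (by linarith)]
    linarith
  calc morreyNormE Ω q' μ' g
      ≤ volume (ball (0 : EuclideanSpace ℝ (Fin n)) (diam Ω)) ^ ((1 - μ') / q' - (1 - μ) / q) *
          morreyNormE Ω q μ g :=
        morreyNormE_le_rpow_mul_morreyNormE Ω (by linarith) hqq hexp_mono hg
    _ ≤ max 1 (volume (ball (0 : EuclideanSpace ℝ (Fin n)) (diam Ω))) * morreyNormE Ω q μ g := by
        gcongr
        exact rpow_le_max_one _ (by linarith) (by linarith)

lemma ofReal_mul_morreyNormE_le_grandPhiE {n : ℕ} (Ω : Set (EuclideanSpace ℝ (Fin n)))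
    {p lam θ α ε σ : ℝ} (hε : ε ∈ Ioo 0 σ) (g : EuclideanSpace ℝ (Fin n) → ℝ≥0∞) :
    ENNReal.ofReal (ε ^ (θ / (p - ε))) * morreyNormE Ω (p - ε) (lam - α * ε) g ≤
      grandPhiE Ω p lam θ α g σ :=
  le_iSup₂_of_le (f := fun ε _ =>
    ENNReal.ofReal (ε ^ (θ / (p - ε))) * morreyNormE Ω (p - ε) (lam - α * ε) g) ε hε le_rfl

lemma morreyNormE_le_ofReal_inv_mul_grandPhiE {n : ℕ} (Ω : Set (EuclideanSpace ℝ (Fin n)))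
    {p lam θ α ε σ : ℝ} (hε : ε ∈ Ioo 0 σ) (g : EuclideanSpace ℝ (Fin n) → ℝ≥0∞) :
    morreyNormE Ω (p - ε) (lam - α * ε) g ≤
      ENNReal.ofReal ((ε ^ (θ / (p - ε)))⁻¹) * grandPhiE Ω p lam θ α g σ := by
  have hw : 0 < ε ^ (θ / (p - ε)) := Real.rpow_pos_of_pos hε.1 _
  calc morreyNormE Ω (p - ε) (lam - α * ε) g
      = ENNReal.ofReal ((ε ^ (θ / (p - ε)))⁻¹) *
          (ENNReal.ofReal (ε ^ (θ / (p - ε))) * morreyNormE Ω (p - ε) (lam - α * ε) g) := by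
        rw [← mul_assoc, ← ENNReal.ofReal_mul (inv_nonneg.2 hw.le), inv_mul_cancel₀ hw.ne',
          ENNReal.ofReal_one, one_mul]
    _ ≤ ENNReal.ofReal ((ε ^ (θ / (p - ε)))⁻¹) * grandPhiE Ω p lam θ α g σ := by
        gcongr
        exact ofReal_mul_morreyNormE_le_grandPhiE Ω hε g

lemma lt_sub_one_and_mul_le_of_lt_sMax {p lam α s : ℝ} (hα : 0 ≤ α) (hlam : 0 ≤ lam)
    (hs : s < sMax p lam α) : s < p - 1 ∧ α * s ≤ lam := by
  unfold sMax at hs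
  split_ifs at hs with hα0
  · exact ⟨hs, by simpa [hα0] using hlam⟩
  · rw [lt_min_iff] at hs
    exact ⟨hs.1, ((lt_div_iff₀' (lt_of_le_of_ne hα (Ne.symm hα0))).1 hs.2).le⟩

noncomputable def grandPhiConst {n : ℕ} (Ω : Set (EuclideanSpace ℝ (Fin n))) (p θ : ℝ) : ℝ :=
  Real.exp θ * 2 ^ θ * max 1 (p - 1) ^ θ *
    (max 1 (volume (ball (0 : EuclideanSpace ℝ (Fin n)) (diam Ω)))).toReal

lemma one_le_toReal_max_one {a : ℝ≥0∞} (ha : a ≠ ⊤) : 1 ≤ (max 1 a).toReal := by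
  simpa using ENNReal.toReal_mono (max_ne_top one_ne_top ha) (le_max_left 1 a)

lemma exp_le_grandPhiConst {n : ℕ} (Ω : Set (EuclideanSpace ℝ (Fin n))) {p θ : ℝ}
    (hθ : 0 ≤ θ) : Real.exp θ ≤ grandPhiConst Ω p θ := by
  have h2 : 1 ≤ (2 : ℝ) ^ θ := Real.one_le_rpow one_le_two hθ
  have hM : 1 ≤ max 1 (p - 1) ^ θ := Real.one_le_rpow (le_max_left _ _) hθ
  have hK := one_le_toReal_max_one
    (measure_ball_lt_top (μ := volume) (x := (0 : EuclideanSpace ℝ (Fin n))) (r := diam Ω)).ne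
  calc Real.exp θ = Real.exp θ * 1 * 1 * 1 := by ring
    _ ≤ grandPhiConst Ω p θ := by
        unfold grandPhiConst
        gcongr

lemma half_rpow_div_sub_inv_le {p θ σ : ℝ} (hθ : 0 ≤ θ) (hσ : 0 < σ) (hσp : σ ≤ p - 1) :
    ((σ / 2) ^ (θ / (p - σ / 2)))⁻¹ ≤ 2 ^ θ * max 1 (p - 1) ^ θ * σ ^ (-(θ / (p - σ))) := by
  have hcompare := rpow_div_sub_le_mul hθ (half_pos hσ) (half_le_self hσ.le) hσp
  rw [div_div_cancel₀ hσ.ne', mul_comm] at hcompare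
  rw [Real.rpow_neg hσ.le, ← div_eq_mul_inv, le_div_iff₀ (Real.rpow_pos_of_pos hσ _),
    inv_mul_le_iff₀ (Real.rpow_pos_of_pos (half_pos hσ) _)]
  exact hcompare

lemma one_le_grandPhiConst_mul {n : ℕ} (Ω : Set (EuclideanSpace ℝ (Fin n))) {p θ σ s : ℝ}
    (hθ : 0 ≤ θ) (hσ : 0 < σ) (hσs : σ ≤ s) (hs : s ≤ p - 1) :
    1 ≤ grandPhiConst Ω p θ * s ^ (θ / (p - s)) * σ ^ (-(θ / (p - σ))) := by
  have hws : 0 ≤ s ^ (θ / (p - s)) := Real.rpow_nonneg (hσ.le.trans hσs) _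
  rw [Real.rpow_neg hσ.le, ← div_eq_mul_inv, one_le_div (Real.rpow_pos_of_pos hσ _)]
  calc σ ^ (θ / (p - σ)) ≤ Real.exp θ * s ^ (θ / (p - s)) :=
        rpow_div_sub_le_exp_mul hθ hσ hσs hs
    _ ≤ grandPhiConst Ω p θ * s ^ (θ / (p - s)) := by
        gcongr
        exact exp_le_grandPhiConst Ω hθ

lemma rpow_mul_mul_half_rpow_inv_le_grandPhiConst_mul {n : ℕ}
    (Ω : Set (EuclideanSpace ℝ (Fin n))) {p θ σ ε s : ℝ} (hθ : 0 ≤ θ) (hσ : 0 < σ)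
    (hσε : σ ≤ ε) (hεs : ε ≤ s) (hs : s ≤ p - 1) :
    ε ^ (θ / (p - ε)) * (max 1 (volume (ball (0 : EuclideanSpace ℝ (Fin n)) (diam Ω)))).toReal *
        ((σ / 2) ^ (θ / (p - σ / 2)))⁻¹ ≤
      grandPhiConst Ω p θ * s ^ (θ / (p - s)) * σ ^ (-(θ / (p - σ))) := by
  have hwε := rpow_div_sub_le_exp_mul hθ (hσ.trans_le hσε) hεs hs
  have hwσ := half_rpow_div_sub_inv_le hθ hσ ((hσε.trans hεs).trans hs)
  have hws : 0 ≤ s ^ (θ / (p - s)) := Real.rpow_nonneg (hσ.le.trans (hσε.trans hεs)) _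
  calc _ ≤ (Real.exp θ * s ^ (θ / (p - s))) *
          (max 1 (volume (ball (0 : EuclideanSpace ℝ (Fin n)) (diam Ω)))).toReal *
          (2 ^ θ * max 1 (p - 1) ^ θ * σ ^ (-(θ / (p - σ)))) := by
        gcongr
    _ = grandPhiConst Ω p θ * s ^ (θ / (p - s)) * σ ^ (-(θ / (p - σ))) := by
        unfold grandPhiConst
        ring

lemma grandPhiE_le_mul_grandPhiE {n : ℕ} (Ω : Set (EuclideanSpace ℝ (Fin n)))
    {p lam θ α σ s : ℝ} (hθ : 0 ≤ θ) (hα : 0 ≤ α) (hlam : lam ≤ 1) (hσ : 0 < σ) (hσs : σ < s)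
    (hsp : s < p - 1) (hαs : α * s ≤ lam) {g : EuclideanSpace ℝ (Fin n) → ℝ≥0∞}
    (hg : Measurable g) :
    grandPhiE Ω p lam θ α g s ≤
      ENNReal.ofReal (grandPhiConst Ω p θ * s ^ (θ / (p - s)) * σ ^ (-(θ / (p - σ)))) *
        grandPhiE Ω p lam θ α g σ := by
  set C := grandPhiConst Ω p θ
  set K := max 1 (volume (ball (0 : EuclideanSpace ℝ (Fin n)) (diam Ω)))
  have hK : K ≠ ⊤ := max_ne_top one_ne_top measure_ball_lt_top.ne
  refine iSup₂_le fun ε hε => ?_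
  rcases lt_or_ge ε σ with hεσ | hσε
  · have hone : 1 ≤ C * s ^ (θ / (p - s)) * σ ^ (-(θ / (p - σ))) :=
      one_le_grandPhiConst_mul Ω hθ hσ hσs.le hsp.le
    exact (ofReal_mul_morreyNormE_le_grandPhiE Ω ⟨hε.1, hεσ⟩ g).trans
      (le_mul_of_one_le_left' (ENNReal.one_le_ofReal.2 hone))
  · have hnest : morreyNormE Ω (p - ε) (lam - α * ε) g ≤
        K * morreyNormE Ω (p - σ / 2) (lam - α * (σ / 2)) g :=
      morreyNormE_le_max_one_mul_morreyNormE Ω (by linarith [hε.2]) (by linarith)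
        (by nlinarith [hε.2]) (by nlinarith) (by nlinarith) hg
    calc ENNReal.ofReal (ε ^ (θ / (p - ε))) * morreyNormE Ω (p - ε) (lam - α * ε) g
        ≤ ENNReal.ofReal (ε ^ (θ / (p - ε))) * (K * (ENNReal.ofReal
            (((σ / 2) ^ (θ / (p - σ / 2)))⁻¹) * grandPhiE Ω p lam θ α g σ)) := by
          grw [hnest, morreyNormE_le_ofReal_inv_mul_grandPhiE Ω ⟨half_pos hσ, half_lt_self hσ⟩ g]
      _ = ENNReal.ofReal (ε ^ (θ / (p - ε)) * K.toReal * ((σ / 2) ^ (θ / (p - σ / 2)))⁻¹) *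
            grandPhiE Ω p lam θ α g σ := by
          rw [ENNReal.ofReal_mul (mul_nonneg (Real.rpow_nonneg hε.1.le _) ENNReal.toReal_nonneg),
            ENNReal.ofReal_mul (Real.rpow_nonneg hε.1.le _),
            ENNReal.ofReal_toReal hK]
          ring
      _ ≤ ENNReal.ofReal (C * s ^ (θ / (p - s)) * σ ^ (-(θ / (p - σ)))) *
            grandPhiE Ω p lam θ α g σ := by
          gcongr ENNReal.ofReal ?_ * _
          exact rpow_mul_mul_half_rpow_inv_le_grandPhiConst_mul Ω hθ hσ hσε hε.2.le hsp.le

theorem grandPhi_dominance_general {n : ℕ} (Ω : Set (EuclideanSpace ℝ (Fin n)))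
    (p θ α lam : ℝ) (hθ : 0 < θ) (hα : 0 ≤ α)
    (hlam0 : 0 ≤ lam) (hlam1 : lam < 1) :
    ∃ C : ℝ, 0 < C ∧
      ∀ σ s : ℝ, 0 < σ → σ < s → s < sMax p lam α →
        ∀ f : EuclideanSpace ℝ (Fin n) → ℝ, Measurable f →
          grandPhi Ω p lam θ α f s ≤
            ENNReal.ofReal (C * s ^ (θ / (p - s)) * σ ^ (-(θ / (p - σ)))) *
              grandPhi Ω p lam θ α f σ := by
  refine ⟨grandPhiConst Ω p θ, (Real.exp_pos θ).trans_le (exp_le_grandPhiConst Ω hθ.le),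
    fun σ s hσ hσs hs f hf => ?_⟩
  obtain ⟨hsp, hαs⟩ := lt_sub_one_and_mul_le_of_lt_sMax hα hlam0 hs
  exact grandPhiE_le_mul_grandPhiE Ω hθ.le hα hlam1.le hσ hσs hsp hαs
    hf.nnnorm.coe_nnreal_ennreal

/-- Lemma on domination of `Φ(f,s)` by `Φ(f,σ)` for `σ < s`.
For a bounded open `Ω ⊆ ℝⁿ`, `1 < p`, `θ > 0`, `α ≥ 0`, `0 ≤ λ < 1`, there is `C > 0`
depending only on `n, p, λ, θ, α` and `diam Ω` such that for all
`0 < σ < s < min{p-1, λ/α}` and all measurable `f`,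
`Φ^{p,λ}_{θ,α}(f,s) ≤ C s^{θ/(p-s)} σ^{-θ/(p-σ)} Φ^{p,λ}_{θ,α}(f,σ)`. -/
theorem grandPhi_dominance {n : ℕ} (Ω : Set (EuclideanSpace ℝ (Fin n)))
    (hΩo : IsOpen Ω) (hΩb : Bornology.IsBounded Ω)
    (p θ α lam : ℝ) (hp : 1 < p) (hθ : 0 < θ) (hα : 0 ≤ α)
    (hlam0 : 0 ≤ lam) (hlam1 : lam < 1) :
    ∃ C : ℝ, 0 < C ∧
      ∀ σ s : ℝ, 0 < σ → σ < s → s < sMax p lam α →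
        ∀ f : EuclideanSpace ℝ (Fin n) → ℝ, Measurable f →
          grandPhi Ω p lam θ α f s ≤
            ENNReal.ofReal (C * s ^ (θ / (p - s)) * σ ^ (-(θ / (p - σ)))) *
              grandPhi Ω p lam θ α f σ :=
  grandPhi_dominance_general Ω p θ α lam hθ hα hlam0 hlam1
end

section
/- Let Ω be a bounded open set in ℝⁿ with diameter d, and let 1 < p < ∞, θ > 0, α ≥ 0, 0 ≤ λ < 1. There exists a constant C, depending only on n, p, λ, θ, α and d (but not on f or σ), such that for every 0 < σ < min{p−1, λ/α} and every measurable function f : Ω → ℝ, the grand grand Morrey norm satisfies ‖f‖_{L^{p),λ)}_{θ,α}(Ω)} ≤ C · σ^{−θ/(p−σ)} · Φ^{p,λ}_{θ,α}(f, σ). -/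
open MeasureTheory Metric Set ENNReal

/-! For `ε < σ` the term `ε ^ (θ / (p - ε)) ‖f‖_{p-ε, λ-αε}` already occurs in `Φ(f, σ)`, and
`σ ^ (θ / (p - σ))` is bounded. For `ε ≥ σ`, Hölder's inequality on each `B̃(x, r)` compares the
`L^{p-ε, λ-αε}` and `L^{p-σ/2, λ-ασ/2}` norms at the cost `|B(x, r)| ^ e`, where `e ≥ 0` is the
increase of the index `(1 - μ) / q` along `ε ↦ (p - ε, λ - αε)`; since `|B(x, r)| ≤ |B(0, d)|` and
`e ≤ 1 - λ + αp` this cost is uniform, and the `L^{p-σ/2, λ-ασ/2}` norm is at most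
`(σ/2) ^ (-θ / (p - σ/2)) Φ(f, σ) ≲ σ ^ (-θ / (p - σ)) Φ(f, σ)`. -/

lemma sMax_le_sub_one (p lam α : ℝ) : sMax p lam α ≤ p - 1 := by
  unfold sMax
  split_ifs
  exacts [le_rfl, min_le_left _ _]

lemma rpow_le_max_one_rpow {x b t θ : ℝ} (hx : 0 ≤ x) (hxb : x ≤ b) (ht : 0 ≤ t)
    (htθ : t ≤ θ) : x ^ t ≤ max 1 (b ^ θ) := by
  rcases le_or_gt x 1 with hx1 | hx1
  · exact le_max_of_le_left (Real.rpow_le_one hx hx1 ht)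
  · exact le_max_of_le_right <| (Real.rpow_le_rpow_of_exponent_le hx1.le htθ).trans
      (Real.rpow_le_rpow hx hxb (ht.trans htθ))

lemma rpow_div_sub_le {p θ ε : ℝ} (hθ : 0 < θ) (hε : 0 < ε) (hεp : ε ≤ p - 1) :
    ε ^ (θ / (p - ε)) ≤ max 1 ((p - 1) ^ θ) :=
  rpow_le_max_one_rpow hε.le hεp (div_nonneg hθ.le (by linarith)) (div_le_self hθ.le (by linarith))

lemma half_rpow_neg_le {σ b a c θ : ℝ} (hσ : 0 < σ) (hσb : σ ≤ b) (ha : 0 ≤ a) (hac : a ≤ c)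
    (hcθ : c ≤ θ) : (σ / 2) ^ (-a) ≤ 2 ^ θ * max 1 (b ^ θ) * σ ^ (-c) := by
  have hsplit : (σ / 2) ^ (-a) = 2 ^ a * σ ^ (c - a) * σ ^ (-c) := by
    rw [div_eq_mul_inv, Real.mul_rpow hσ.le (by norm_num), Real.inv_rpow zero_le_two,
      Real.rpow_neg zero_le_two, inv_inv, mul_assoc, ← Real.rpow_add hσ]
    ring_nf
  rw [hsplit]
  refine mul_le_mul_of_nonneg_right (mul_le_mul ?_ ?_ (by positivity) (by positivity))
    (by positivity)
  · exact Real.rpow_le_rpow_of_exponent_le one_le_two (hac.trans hcθ)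
  · exact rpow_le_max_one_rpow hσ.le hσb (sub_nonneg.2 hac) (by linarith)

lemma rpow_neg_mul_lintegral_rpow_le {X : Type*} [MeasurableSpace X] {μ : Measure X}
    {g : X → ℝ≥0∞} (hg : AEMeasurable g μ) {q₁ q₂ l₁ l₂ : ℝ} (hq₁ : 0 < q₁) (hq : q₁ ≤ q₂)
    {v : ℝ≥0∞} (hv₀ : v ≠ 0) (hv : v ≠ ∞) (hμv : μ univ ≤ v) :
    (v ^ (-l₁) * ∫⁻ x, g x ^ q₁ ∂μ) ^ (1 / q₁) ≤
      v ^ ((1 - l₁) / q₁ - (1 - l₂) / q₂) * (v ^ (-l₂) * ∫⁻ x, g x ^ q₂ ∂μ) ^ (1 / q₂) := by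
  have hq₂ : 0 < q₂ := hq₁.trans_le hq
  have hHolder := eLpNorm'_le_eLpNorm'_mul_rpow_measure_univ hq₁ hq hg.aestronglyMeasurable
  rw [eLpNorm'_eq_lintegral_enorm, eLpNorm'_eq_lintegral_enorm] at hHolder
  simp only [enorm_eq_self] at hHolder
  rw [ENNReal.mul_rpow_of_nonneg _ _ (by positivity),
    ENNReal.mul_rpow_of_nonneg _ _ (by positivity), ← ENNReal.rpow_mul, ← ENNReal.rpow_mul,
    ← mul_assoc, ← ENNReal.rpow_add _ _ hv₀ hv]
  calc v ^ (-l₁ * (1 / q₁)) * (∫⁻ x, g x ^ q₁ ∂μ) ^ (1 / q₁)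
      ≤ v ^ (-l₁ * (1 / q₁)) * ((∫⁻ x, g x ^ q₂ ∂μ) ^ (1 / q₂) * v ^ (1 / q₁ - 1 / q₂)) := by
        gcongr
        refine hHolder.trans (mul_le_mul_right (ENNReal.rpow_le_rpow hμv ?_) _)
        exact sub_nonneg.2 (one_div_le_one_div_of_le hq₁ hq)
    _ = _ := by
        rw [mul_comm (_ ^ (1 / q₂)), ← mul_assoc, ← ENNReal.rpow_add _ _ hv₀ hv]
        ring_nf

lemma one_sub_sub_mul_div_sub_le_of_le {p lam α ε₁ ε₂ : ℝ} (h : 0 ≤ 1 - lam + α * p)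
    (hε : ε₁ ≤ ε₂) (hε₂ : ε₂ < p) :
    (1 - (lam - α * ε₁)) / (p - ε₁) ≤ (1 - (lam - α * ε₂)) / (p - ε₂) := by
  rw [div_le_div_iff₀ (by linarith) (by linarith)]
  nlinarith [mul_nonneg h (sub_nonneg.2 hε)]

section Morrey

variable {n : ℕ} {Ω : Set (EuclideanSpace ℝ (Fin n))} {g : EuclideanSpace ℝ (Fin n) → ℝ≥0∞}

lemma morreyNormE_le_rpow_mul (hg : AEMeasurable g) {q₁ q₂ l₁ l₂ E M : ℝ} (hq₁ : 0 < q₁)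
    (hq : q₁ ≤ q₂) (he : 0 ≤ (1 - l₁) / q₁ - (1 - l₂) / q₂)
    (hE : (1 - l₁) / q₁ - (1 - l₂) / q₂ ≤ E) (hM : 1 ≤ M)
    (hΩM : volume (ball (0 : EuclideanSpace ℝ (Fin n)) (diam Ω)) ≤ ENNReal.ofReal M) :
    morreyNormE Ω q₁ l₁ g ≤ ENNReal.ofReal (M ^ E) * morreyNormE Ω q₂ l₂ g := by
  refine iSup₂_le fun x hx => iSup₂_le fun r hr => ?_
  have hvM : volume (ball x r) ≤ ENNReal.ofReal M := calc
    volume (ball x r) ≤ volume (ball x (diam Ω)) := measure_mono (ball_subset_ball hr.2)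
    _ = volume (ball (0 : EuclideanSpace ℝ (Fin n)) (diam Ω)) :=
      Measure.addHaar_ball_center _ _ _
    _ ≤ ENNReal.ofReal M := hΩM
  have hvE : volume (ball x r) ^ ((1 - l₁) / q₁ - (1 - l₂) / q₂) ≤ ENNReal.ofReal (M ^ E) := by
    rw [← ENNReal.ofReal_rpow_of_pos (one_pos.trans_le hM)]
    exact (ENNReal.rpow_le_rpow hvM he).trans
      (ENNReal.rpow_le_rpow_of_exponent_le (ENNReal.one_le_ofReal.2 hM) hE)
  have hμv : volume.restrict (ball x r ∩ Ω) univ ≤ volume (ball x r) := by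
    rw [Measure.restrict_apply_univ]
    exact measure_mono inter_subset_left
  exact (rpow_neg_mul_lintegral_rpow_le hg.restrict hq₁ hq (measure_ball_pos _ x hr.1).ne'
    measure_ball_lt_top.ne hμv).trans
      (mul_le_mul' hvE (le_iSup₂_of_le x hx (le_iSup₂_of_le r hr le_rfl)))

variable {p lam θ α : ℝ}

lemma le_grandPhiE {ε s : ℝ} (hε : ε ∈ Ioo 0 s) :
    ENNReal.ofReal (ε ^ (θ / (p - ε))) * morreyNormE Ω (p - ε) (lam - α * ε) g ≤
      grandPhiE Ω p lam θ α g s :=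
  le_iSup₂_of_le (f := fun ε (_ : ε ∈ Ioo 0 s) =>
    ENNReal.ofReal (ε ^ (θ / (p - ε))) * morreyNormE Ω (p - ε) (lam - α * ε) g) ε hε le_rfl

lemma morreyNormE_le_rpow_neg_mul_grandPhiE {τ s : ℝ} (hτ : τ ∈ Ioo 0 s) :
    morreyNormE Ω (p - τ) (lam - α * τ) g ≤
      ENNReal.ofReal (τ ^ (-(θ / (p - τ)))) * grandPhiE Ω p lam θ α g s := calc
  morreyNormE Ω (p - τ) (lam - α * τ) g
      = ENNReal.ofReal (τ ^ (-(θ / (p - τ))))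
        * (ENNReal.ofReal (τ ^ (θ / (p - τ))) * morreyNormE Ω (p - τ) (lam - α * τ) g) := by
    rw [← mul_assoc, ← ENNReal.ofReal_mul (Real.rpow_nonneg hτ.1.le _), ← Real.rpow_add hτ.1,
      neg_add_cancel, Real.rpow_zero, ENNReal.ofReal_one, one_mul]
  _ ≤ _ := mul_le_mul_right (le_grandPhiE hτ) _

lemma rpow_mul_morreyNormE_le (hg : AEMeasurable g) (hθ : 0 < θ) (hα : 0 ≤ α) (hlam : lam < 1)
    {M : ℝ} (hM : 1 ≤ M)
    (hΩM : volume (ball (0 : EuclideanSpace ℝ (Fin n)) (diam Ω)) ≤ ENNReal.ofReal M)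
    {τ σ ε : ℝ} (hτ : τ ∈ Ioo 0 σ) (hτε : τ ≤ ε) (hεp : ε ≤ p - 1) :
    ENNReal.ofReal (ε ^ (θ / (p - ε))) * morreyNormE Ω (p - ε) (lam - α * ε) g ≤
      ENNReal.ofReal (max 1 ((p - 1) ^ θ) * M ^ (1 - lam + α * p) * τ ^ (-(θ / (p - τ))))
        * grandPhiE Ω p lam θ α g σ := by
  have hε : 0 < ε := hτ.1.trans_le hτε
  have hcost : (1 - (lam - α * ε)) / (p - ε) - (1 - (lam - α * τ)) / (p - τ) ≤
      1 - lam + α * p := by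
    have h₁ : (1 - (lam - α * ε)) / (p - ε) ≤ 1 - (lam - α * ε) :=
      div_le_self (by nlinarith) (by linarith)
    have h₂ : 0 ≤ (1 - (lam - α * τ)) / (p - τ) :=
      div_nonneg (by nlinarith [hτ.1]) (by linarith)
    nlinarith
  have hmorrey := morreyNormE_le_rpow_mul (Ω := Ω) hg (by linarith) (by linarith : p - ε ≤ p - τ)
    (sub_nonneg.2 (one_sub_sub_mul_div_sub_le_of_le (by nlinarith) hτε (by linarith))) hcost
    hM hΩM
  calc ENNReal.ofReal (ε ^ (θ / (p - ε))) * morreyNormE Ω (p - ε) (lam - α * ε) g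
      ≤ ENNReal.ofReal (max 1 ((p - 1) ^ θ)) * (ENNReal.ofReal (M ^ (1 - lam + α * p))
          * (ENNReal.ofReal (τ ^ (-(θ / (p - τ)))) * grandPhiE Ω p lam θ α g σ)) := by
        exact mul_le_mul' (ENNReal.ofReal_le_ofReal (rpow_div_sub_le hθ hε hεp))
          (hmorrey.trans (mul_le_mul_right (morreyNormE_le_rpow_neg_mul_grandPhiE hτ) _))
    _ = _ := by
        rw [ENNReal.ofReal_mul (by positivity), ENNReal.ofReal_mul (by positivity)]
        ring

theorem grandNormE_le_rpow_neg_mul_grandPhiE (hg : AEMeasurable g) (hp : 1 < p) (hθ : 0 < θ)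
    (hα : 0 ≤ α) (hlam : lam < 1) {M : ℝ} (hM : 1 ≤ M)
    (hΩM : volume (ball (0 : EuclideanSpace ℝ (Fin n)) (diam Ω)) ≤ ENNReal.ofReal M)
    {σ : ℝ} (hσ : 0 < σ) (hσs : σ < sMax p lam α) :
    grandNormE Ω p lam θ α g ≤
      ENNReal.ofReal (max 1 ((p - 1) ^ θ) * (2 ^ θ * max 1 ((p - 1) ^ θ) *
        M ^ (1 - lam + α * p)) * σ ^ (-(θ / (p - σ)))) * grandPhiE Ω p lam θ α g σ := by
  set K := max 1 ((p - 1) ^ θ)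
  have hME : 1 ≤ M ^ (1 - lam + α * p) := Real.one_le_rpow hM (by nlinarith)
  have h2θ : 1 ≤ (2 : ℝ) ^ θ := Real.one_le_rpow one_le_two hθ.le
  have hK : K ≤ K * (2 ^ θ * K * M ^ (1 - lam + α * p)) :=
    le_mul_of_one_le_right (by positivity)
      (one_le_mul_of_one_le_of_one_le (one_le_mul_of_one_le_of_one_le h2θ (le_max_left _ _)) hME)
  have hσp : σ < p - 1 := hσs.trans_le (sMax_le_sub_one p lam α)
  refine iSup₂_le fun ε ⟨hε, hεs⟩ => ?_
  rcases lt_or_ge ε σ with hεσ | hσε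
  · refine (le_grandPhiE ⟨hε, hεσ⟩).trans (le_mul_of_one_le_left zero_le ?_)
    rw [ENNReal.one_le_ofReal, Real.rpow_neg hσ.le, ← div_eq_mul_inv,
      one_le_div (by positivity)]
    exact (rpow_div_sub_le hθ hσ hσp.le).trans hK
  · refine (rpow_mul_morreyNormE_le hg hθ hα hlam hM hΩM ⟨half_pos hσ, half_lt_self hσ⟩
      (by linarith) (hεs.trans_le (sMax_le_sub_one p lam α)).le).trans
      (mul_le_mul_left (ENNReal.ofReal_le_ofReal ?_) _)
    calc K * M ^ (1 - lam + α * p) * (σ / 2) ^ (-(θ / (p - σ / 2)))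
        ≤ K * M ^ (1 - lam + α * p) * (2 ^ θ * K * σ ^ (-(θ / (p - σ)))) := by
          gcongr
          exact half_rpow_neg_le hσ hσp.le (div_nonneg hθ.le (by linarith))
            (div_le_div_of_nonneg_left hθ.le (by linarith) (by linarith))
            (div_le_self hθ.le (by linarith))
      _ = _ := by ring

end Morrey

theorem grandNorm_dominance_general {n : ℕ} (Ω : Set (EuclideanSpace ℝ (Fin n)))
    (p θ α lam : ℝ) (hp : 1 < p) (hθ : 0 < θ) (hα : 0 ≤ α)
    (hlam1 : lam < 1) :
    ∃ C : ℝ, 0 < C ∧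
      ∀ σ : ℝ, 0 < σ → σ < sMax p lam α →
        ∀ f : EuclideanSpace ℝ (Fin n) → ℝ, Measurable f →
          grandNorm Ω p lam θ α f ≤
            ENNReal.ofReal (C * σ ^ (-(θ / (p - σ)))) * grandPhi Ω p lam θ α f σ := by
  set M := max 1 (volume (ball (0 : EuclideanSpace ℝ (Fin n)) (diam Ω))).toReal
  have hΩM : volume (ball (0 : EuclideanSpace ℝ (Fin n)) (diam Ω)) ≤ ENNReal.ofReal M :=
    (ENNReal.ofReal_toReal measure_ball_lt_top.ne).ge.trans
      (ENNReal.ofReal_le_ofReal (le_max_right _ _))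
  exact ⟨max 1 ((p - 1) ^ θ) * (2 ^ θ * max 1 ((p - 1) ^ θ) * M ^ (1 - lam + α * p)),
    by positivity, fun σ hσ hσs f hf => grandNormE_le_rpow_neg_mul_grandPhiE
      hf.nnnorm.coe_nnreal_ennreal.aemeasurable hp hθ hα hlam1 (le_max_left _ _) hΩM hσ hσs⟩

/-- Domination of the grand grand Morrey norm.
For a bounded open `Ω ⊆ ℝⁿ`, `1 < p`, `θ > 0`, `α ≥ 0`, `0 ≤ λ < 1`, there is `C > 0`
depending only on `n, p, λ, θ, α` and `diam Ω` such that for all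
`0 < σ < min{p-1, λ/α}` and all measurable `f`,
`‖f‖_{L^{p),λ)}_{θ,α}(Ω)} ≤ C σ^{-θ/(p-σ)} Φ^{p,λ}_{θ,α}(f,σ)`. -/
theorem grandNorm_dominance {n : ℕ} (Ω : Set (EuclideanSpace ℝ (Fin n)))
    (hΩo : IsOpen Ω) (hΩb : Bornology.IsBounded Ω)
    (p θ α lam : ℝ) (hp : 1 < p) (hθ : 0 < θ) (hα : 0 ≤ α)
    (hlam0 : 0 ≤ lam) (hlam1 : lam < 1) :
    ∃ C : ℝ, 0 < C ∧
      ∀ σ : ℝ, 0 < σ → σ < sMax p lam α →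
        ∀ f : EuclideanSpace ℝ (Fin n) → ℝ, Measurable f →
          grandNorm Ω p lam θ α f ≤
            ENNReal.ofReal (C * σ ^ (-(θ / (p - σ)))) * grandPhi Ω p lam θ α f σ :=
  grandNorm_dominance_general Ω p θ α lam hp hθ hα hlam1
end
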